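/- (Polyphase anchoring equivariance.) Fix t ≥ 1 and the phase norms N as above. Suppose a volume X has a unique phase k* = (p*,q*,r*) maximizing N_k(X) over all phases. Then for any integers g = (g₁,g₂,g₃): (i) T_g X has a unique norm-maximizing phase, namely k̂ = ((p*+g₁) mod s₁, (q*+g₂) mod s₂, (r*+g₃) mod s₃); and (ii) defining the anchoring operator 𝒫(Y) = T_{−k̂(Y)} Y, where k̂(Y) is the unique norm-maximizing phase of Y viewed as a translation vector, there exists a translation g′ = (g′₁,g′₂,g′₃) such that 𝒫(T_g X) = T_{g′} 𝒫(X). -/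

import Mathlib

/-!
Translating a volume by `g` permutes its polyphase components: the component of `T_g X` at
phase `k` is, up to a cyclic reindexing of the coarse grid, the component of `X` at phase
`k - g mod s`. Reindexing does not change a sum, so `N_k(T_g X) = N_{k-g}(X)`, and the unique
maximiser moves from `k*` to `k* + g mod s`. Since translations compose additively, anchoring
`T_g X` and `X` differs by the translation `g + k* - k̂`.
-/

noncomputable section

open scoped BigOperators

/-- The well-defined map `ZMod n → ZMod (n*s)` induced by `a ↦ s*a + p`. -/
def phaseEmb (n s : ℕ) (p : ℤ) (i : ZMod n) : ZMod (n * s) :=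
  (s : ZMod (n * s)) * (i.val : ZMod (n * s)) + (p : ZMod (n * s))

/-- Circular translation of a volume by an integer vector `g`:
`(T_g X)(i,j,k) = X(i-g₁, j-g₂, k-g₃)`. -/
def Tvol {D H W : ℕ} (g : ℤ × ℤ × ℤ) (X : ZMod D × ZMod H × ZMod W → ℝ) :
    ZMod D × ZMod H × ZMod W → ℝ :=
  fun v => X (v.1 - (g.1 : ZMod D), v.2.1 - (g.2.1 : ZMod H), v.2.2 - (g.2.2 : ZMod W))

/-- Polyphase component `Ψ(X)_{(p,q,r)}(i,j,k) = X(s₁·i+p, s₂·j+q, s₃·k+r)`. -/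
def Psi (s₁ s₂ s₃ n₁ n₂ n₃ : ℕ) (p q r : ℤ)
    (X : ZMod (n₁ * s₁) × ZMod (n₂ * s₂) × ZMod (n₃ * s₃) → ℝ) :
    ZMod n₁ × ZMod n₂ × ZMod n₃ → ℝ :=
  fun v => X (phaseEmb n₁ s₁ p v.1, phaseEmb n₂ s₂ q v.2.1, phaseEmb n₃ s₃ r v.2.2)

/-- Phase norm `N_{(p,q,r)}(X) = (Σ_{(i,j,k)} |Ψ(X)_{(p,q,r)}(i,j,k)|^t)^{1/t}`,
for a phase indexed by `Fin s₁ × Fin s₂ × Fin s₃`. -/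
noncomputable def phaseNorm (s₁ s₂ s₃ n₁ n₂ n₃ : ℕ) [NeZero n₁] [NeZero n₂] [NeZero n₃]
    (t : ℝ) (k : Fin s₁ × Fin s₂ × Fin s₃)
    (X : ZMod (n₁ * s₁) × ZMod (n₂ * s₂) × ZMod (n₃ * s₃) → ℝ) : ℝ :=
  (∑ v : ZMod n₁ × ZMod n₂ × ZMod n₃,
      |Psi s₁ s₂ s₃ n₁ n₂ n₃ (k.1 : ℤ) (k.2.1 : ℤ) (k.2.2 : ℤ) X v| ^ t) ^ (1 / t)

/-- Shift of a phase component by an integer, modulo the patch size. -/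
def phAdd {s : ℕ} [NeZero s] (p : Fin s) (g : ℤ) : Fin s :=
  ⟨(((p : ℤ) + g) % (s : ℤ)).toNat, by
    have hs : (0 : ℤ) < (s : ℤ) := by
      exact_mod_cast Nat.pos_of_ne_zero (NeZero.ne s)
    have h1 := Int.emod_nonneg ((p : ℤ) + g) hs.ne'
    have h2 := Int.emod_lt_of_pos ((p : ℤ) + g) hs
    omega⟩

/-- Componentwise shift of a phase triple by an integer vector. -/
def phAdd3 {s₁ s₂ s₃ : ℕ} [NeZero s₁] [NeZero s₂] [NeZero s₃]
    (k : Fin s₁ × Fin s₂ × Fin s₃) (g : ℤ × ℤ × ℤ) : Fin s₁ × Fin s₂ × Fin s₃ :=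
  (phAdd k.1 g.1, phAdd k.2.1 g.2.1, phAdd k.2.2 g.2.2)

theorem phaseEmb_sub_intCast {n : ℕ} (s : ℕ) (p g : ℤ) (i : ZMod n) :
    phaseEmb n s p i - g = phaseEmb n s (p - g) i := by
  unfold phaseEmb
  push_cast
  ring

section PhaseEmbedding

variable {n : ℕ} [NeZero n] (s : ℕ)

theorem natCast_mul_val_eq_of_intCast_eq {a : ZMod n} {z : ℤ} (h : (z : ZMod n) = a) :
    (s : ZMod (n * s)) * (a.val : ZMod (n * s)) = s * z := by
  have hmod : (a.val : ℤ) ≡ z [ZMOD n] := by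
    rw [← ZMod.intCast_eq_intCast_iff, h]
    simp
  have hmul : ((s * a.val : ℤ) : ZMod (n * s)) = ((s * z : ℤ) : ZMod (n * s)) := by
    rw [ZMod.intCast_eq_intCast_iff, Nat.cast_mul, mul_comm (n : ℤ)]
    exact hmod.mul_left' (c := s)
  push_cast at hmul
  exact hmul

theorem phaseEmb_add_mul (p c : ℤ) (i : ZMod n) :
    phaseEmb n s (p + s * c) i = phaseEmb n s p (i + c) := by
  unfold phaseEmb
  rw [natCast_mul_val_eq_of_intCast_eq s (a := i + (c : ZMod n)) (z := i.val + c)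
    (by push_cast; simp)]
  push_cast
  ring

end PhaseEmbedding

section PhaseShift

variable {s : ℕ} [NeZero s]

theorem phAdd_coe (p : Fin s) (g : ℤ) : ((phAdd p g : ℕ) : ℤ) = ((p : ℤ) + g) % s :=
  Int.toNat_of_nonneg (Int.emod_nonneg _ (by exact_mod_cast NeZero.ne s))

theorem phAdd_zero (p : Fin s) : phAdd p 0 = p := by
  apply Fin.ext
  have h : ((phAdd p 0 : ℕ) : ℤ) = (p : ℤ) := by
    rw [phAdd_coe, add_zero, Int.emod_eq_of_lt (by positivity) (by exact_mod_cast p.isLt)]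
  exact_mod_cast h

theorem phAdd_phAdd (p : Fin s) (g h : ℤ) : phAdd (phAdd p g) h = phAdd p (g + h) := by
  apply Fin.ext
  have e : ((phAdd (phAdd p g) h : ℕ) : ℤ) = ((phAdd p (g + h) : ℕ) : ℤ) := by
    rw [phAdd_coe, phAdd_coe, phAdd_coe, Int.emod_add_emod, add_assoc]
  exact_mod_cast e

/-- The coarse-grid offset `(p - g) / s` is the carry of `p - g` out of the phase range. -/
theorem phaseEmb_sub_intCast_eq_phAdd {n : ℕ} [NeZero n] (p : Fin s) (g : ℤ) (i : ZMod n) :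
    phaseEmb n s p i - g = phaseEmb n s (phAdd p (-g)) (i + (((p : ℤ) - g) / s : ℤ)) := by
  rw [phaseEmb_sub_intCast, ← phaseEmb_add_mul, phAdd_coe, ← sub_eq_add_neg,
    Int.emod_add_mul_ediv]

end PhaseShift

section PhaseShift3

variable {s₁ s₂ s₃ : ℕ} [NeZero s₁] [NeZero s₂] [NeZero s₃]

theorem phAdd3_zero (k : Fin s₁ × Fin s₂ × Fin s₃) : phAdd3 k 0 = k := by
  simp only [phAdd3, Prod.fst_zero, Prod.snd_zero, phAdd_zero]

theorem phAdd3_phAdd3 (k : Fin s₁ × Fin s₂ × Fin s₃) (g h : ℤ × ℤ × ℤ) :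
    phAdd3 (phAdd3 k g) h = phAdd3 k (g + h) := by
  simp only [phAdd3, phAdd_phAdd, Prod.fst_add, Prod.snd_add]

theorem phAdd3_phAdd3_neg (k : Fin s₁ × Fin s₂ × Fin s₃) (g : ℤ × ℤ × ℤ) :
    phAdd3 (phAdd3 k g) (-g) = k := by
  rw [phAdd3_phAdd3, add_neg_cancel, phAdd3_zero]

theorem phAdd3_neg_phAdd3 (k : Fin s₁ × Fin s₂ × Fin s₃) (g : ℤ × ℤ × ℤ) :
    phAdd3 (phAdd3 k (-g)) g = k := by
  rw [phAdd3_phAdd3, neg_add_cancel, phAdd3_zero]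

end PhaseShift3

theorem Tvol_add {D H W : ℕ} (a b : ℤ × ℤ × ℤ) (X : ZMod D × ZMod H × ZMod W → ℝ) :
    Tvol (a + b) X = Tvol a (Tvol b X) := by
  funext v
  simp only [Tvol, Prod.fst_add, Prod.snd_add, Int.cast_add, sub_add_eq_sub_sub]

theorem phaseNorm_Tvol (s₁ s₂ s₃ n₁ n₂ n₃ : ℕ)
    [NeZero s₁] [NeZero s₂] [NeZero s₃] [NeZero n₁] [NeZero n₂] [NeZero n₃]
    (t : ℝ) (k : Fin s₁ × Fin s₂ × Fin s₃) (g : ℤ × ℤ × ℤ)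
    (X : ZMod (n₁ * s₁) × ZMod (n₂ * s₂) × ZMod (n₃ * s₃) → ℝ) :
    phaseNorm s₁ s₂ s₃ n₁ n₂ n₃ t k (Tvol g X)
      = phaseNorm s₁ s₂ s₃ n₁ n₂ n₃ t (phAdd3 k (-g)) X := by
  let m : ZMod n₁ × ZMod n₂ × ZMod n₃ :=
    ((((k.1 : ℤ) - g.1) / s₁ : ℤ), (((k.2.1 : ℤ) - g.2.1) / s₂ : ℤ),
      (((k.2.2 : ℤ) - g.2.2) / s₃ : ℤ))
  unfold phaseNorm
  congr 1
  refine Fintype.sum_equiv (Equiv.addRight m) _ _ fun v => ?_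
  simp only [Psi, Tvol, phaseEmb_sub_intCast_eq_phAdd]
  rfl

theorem polyphase_anchoring_equivariance_general
    (s₁ s₂ s₃ n₁ n₂ n₃ : ℕ)
    [NeZero s₁] [NeZero s₂] [NeZero s₃] [NeZero n₁] [NeZero n₂] [NeZero n₃]
    (t : ℝ)
    (X : ZMod (n₁ * s₁) × ZMod (n₂ * s₂) × ZMod (n₃ * s₃) → ℝ)
    (kstar : Fin s₁ × Fin s₂ × Fin s₃)
    (hmax : ∀ k : Fin s₁ × Fin s₂ × Fin s₃, k ≠ kstar →
      phaseNorm s₁ s₂ s₃ n₁ n₂ n₃ t k X < phaseNorm s₁ s₂ s₃ n₁ n₂ n₃ t kstar X)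
    (g₁ g₂ g₃ : ℤ) :
    (∀ k : Fin s₁ × Fin s₂ × Fin s₃, k ≠ phAdd3 kstar (g₁, g₂, g₃) →
      phaseNorm s₁ s₂ s₃ n₁ n₂ n₃ t k (Tvol (g₁, g₂, g₃) X)
        < phaseNorm s₁ s₂ s₃ n₁ n₂ n₃ t (phAdd3 kstar (g₁, g₂, g₃))
            (Tvol (g₁, g₂, g₃) X))
    ∧ ∃ g' : ℤ × ℤ × ℤ,
        Tvol (-((phAdd3 kstar (g₁, g₂, g₃)).1 : ℤ),
              -((phAdd3 kstar (g₁, g₂, g₃)).2.1 : ℤ),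
              -((phAdd3 kstar (g₁, g₂, g₃)).2.2 : ℤ))
          (Tvol (g₁, g₂, g₃) X)
        = Tvol g'
            (Tvol (-(kstar.1 : ℤ), -(kstar.2.1 : ℤ), -(kstar.2.2 : ℤ)) X) := by
  set khat := phAdd3 kstar (g₁, g₂, g₃)
  refine ⟨fun k hk => ?_, ?_⟩
  · rw [phaseNorm_Tvol, phaseNorm_Tvol, phAdd3_phAdd3_neg]
    refine hmax _ fun hk' => hk ?_
    rw [← phAdd3_neg_phAdd3 k (g₁, g₂, g₃), hk']
  · refine ⟨((-(khat.1 : ℤ), -(khat.2.1 : ℤ), -(khat.2.2 : ℤ)) + (g₁, g₂, g₃))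
      - (-(kstar.1 : ℤ), -(kstar.2.1 : ℤ), -(kstar.2.2 : ℤ)), ?_⟩
    rw [← Tvol_add, ← Tvol_add, sub_add_cancel]

/-- **Polyphase anchoring equivariance.**  If `X` has a unique phase `k*`
maximizing the phase norm, then for any translation `g`: (i) `T_g X` has a unique
norm-maximizing phase, namely `k* ⊕ g`; (ii) with the anchoring operator
`𝒫(Y) = T_{−k̂(Y)} Y` (where `k̂(Y)` is the unique norm-maximizing phase of `Y`),
there is a translation `g'` with `𝒫(T_g X) = T_{g'} 𝒫(X)`. -/
theorem polyphase_anchoring_equivariance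
    (s₁ s₂ s₃ n₁ n₂ n₃ : ℕ)
    [NeZero s₁] [NeZero s₂] [NeZero s₃] [NeZero n₁] [NeZero n₂] [NeZero n₃]
    (t : ℝ) (ht : 1 ≤ t)
    (X : ZMod (n₁ * s₁) × ZMod (n₂ * s₂) × ZMod (n₃ * s₃) → ℝ)
    (kstar : Fin s₁ × Fin s₂ × Fin s₃)
    (hmax : ∀ k : Fin s₁ × Fin s₂ × Fin s₃, k ≠ kstar →
      phaseNorm s₁ s₂ s₃ n₁ n₂ n₃ t k X < phaseNorm s₁ s₂ s₃ n₁ n₂ n₃ t kstar X)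
    (g₁ g₂ g₃ : ℤ) :
    (∀ k : Fin s₁ × Fin s₂ × Fin s₃, k ≠ phAdd3 kstar (g₁, g₂, g₃) →
      phaseNorm s₁ s₂ s₃ n₁ n₂ n₃ t k (Tvol (g₁, g₂, g₃) X)
        < phaseNorm s₁ s₂ s₃ n₁ n₂ n₃ t (phAdd3 kstar (g₁, g₂, g₃))
            (Tvol (g₁, g₂, g₃) X))
    ∧ ∃ g' : ℤ × ℤ × ℤ,
        Tvol (-((phAdd3 kstar (g₁, g₂, g₃)).1 : ℤ),
              -((phAdd3 kstar (g₁, g₂, g₃)).2.1 : ℤ),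
              -((phAdd3 kstar (g₁, g₂, g₃)).2.2 : ℤ))
          (Tvol (g₁, g₂, g₃) X)
        = Tvol g'
            (Tvol (-(kstar.1 : ℤ), -(kstar.2.1 : ℤ), -(kstar.2.2 : ℤ)) X) :=
  polyphase_anchoring_equivariance_general s₁ s₂ s₃ n₁ n₂ n₃ t X kstar hmax g₁ g₂ g₃
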